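/- arXiv:1511.04349 — 2 statements merged into one kernel-verified Lean document; each statement's English description precedes it below -/
import Mathlib

section
/- Let N ≥ 3, and consider the recursion p_{n+1} = N p_n/(2(N - p_n)) with initial value p₀ > N/2 (and p₀ < 3N/4). Then there exists a natural number n such that either p_n ≥ 3N/4 or p_n ≥ N at some step; i.e., the sequence, as long as it stays below 3N/4, reaches 3N/4 in finitely many steps. -/
/-!
Above the fixed point `N / 2` the map `x ↦ N x / (2 (N - x))` multiplies `x` by `N / (2 (N - x))`,
a factor that grows with `x`. So while the orbit stays below `N` it grows at least geometrically,
with ratio `N / (2 (N - p 0)) > 1`, and therefore cannot stay below `3 N / 4`.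
-/

lemma one_lt_bootstrap_ratio {N q : ℝ} (hq : N / 2 < q) (hqN : q < N) :
    1 < N / (2 * (N - q)) :=
  (one_lt_div (by linarith)).2 (by linarith)

lemma bootstrap_ratio_mul_le {N q x : ℝ} (hq : N / 2 < q) (hqx : q ≤ x) (hxN : x < N) :
    N / (2 * (N - q)) * x ≤ N * x / (2 * (N - x)) := by
  have hN : 0 < N := by linarith
  have hx : 0 < x := by linarith
  rw [div_mul_eq_mul_div]
  gcongr

lemma bootstrap_ratio_pow_mul_le {N : ℝ} {p : ℕ → ℝ} (h0 : N / 2 < p 0)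
    (hrec : ∀ n, p (n + 1) = N * p n / (2 * (N - p n))) (hlt : ∀ n, p n < N) (n : ℕ) :
    (N / (2 * (N - p 0))) ^ n * p 0 ≤ p n := by
  set r := N / (2 * (N - p 0))
  have hr : 1 ≤ r := (one_lt_bootstrap_ratio h0 (hlt 0)).le
  have hp0_pos : 0 < p 0 := by linarith [hlt 0]
  induction n with
  | zero => simp
  | succ n ih =>
    have hp0 : p 0 ≤ p n := (le_mul_of_one_le_left hp0_pos.le (one_le_pow₀ hr)).trans ih
    calc r ^ (n + 1) * p 0 = r * (r ^ n * p 0) := by ring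
      _ ≤ r * p n := by gcongr
      _ ≤ p (n + 1) := hrec n ▸ bootstrap_ratio_mul_le h0 hp0 (hlt n)

theorem stmt7_general (N : ℕ) (p : ℕ → ℝ)
    (h0 : (N : ℝ) / 2 < p 0)
    (hrec : ∀ n, p (n + 1) = N * p n / (2 * (N - p n))) :
    ∃ n, 3 * (N : ℝ) / 4 ≤ p n ∨ (N : ℝ) ≤ p n := by
  by_contra! h
  obtain ⟨n, hn⟩ := pow_unbounded_of_one_lt (3 * (N : ℝ) / 4 / p 0)
    (one_lt_bootstrap_ratio h0 (h 0).2)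
  rw [div_lt_iff₀ (by linarith [(N.cast_nonneg : (0 : ℝ) ≤ N)])] at hn
  linarith [bootstrap_ratio_pow_mul_le h0 hrec (fun n ↦ (h n).2) n, (h n).1]

theorem stmt7 (N : ℕ) (hN : 3 ≤ N) (p : ℕ → ℝ)
    (h0 : (N : ℝ) / 2 < p 0) (h0' : p 0 < 3 * N / 4)
    (hrec : ∀ n, p (n + 1) = N * p n / (2 * (N - p n))) :
    ∃ n, 3 * (N : ℝ) / 4 ≤ p n ∨ (N : ℝ) ≤ p n :=
  stmt7_general N p h0 hrec
end

section
/- Given positive masses M₁₃, M₂₄, M₁₄, M₂₃ > 0 satisfying M₁₃ + M₂₄ = M₁₄ + M₂₃ =: M, the constants u₁ = M₁₃M₁₄/M, u₂ = M₂₃M₂₄/M, u₃ = M₁₃M₂₃/M, u₄ = M₁₄M₂₄/M are the unique positive solution of the system u₁u₂ = u₃u₄, u₁ + u₃ = M₁₃, u₂ + u₄ = M₂₄, u₁ + u₄ = M₁₄, u₂ + u₃ = M₂₃. -/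
/-!
Writing `M = u₁ + u₂ + u₃ + u₄`, the detailed-balance condition `u₁ u₂ = u₃ u₄` is exactly
`(u₁ + u₃)(u₁ + u₄) = u₁ M`, i.e. `M₁₃ M₁₄ = u₁ M`, and likewise for the other three unknowns.
So the nonlinear system pins every `uᵢ` down to a quotient of two masses by `M`.
-/

def IsDetailedBalanceEquilibrium {R : Type*} [CommRing R] (M13 M24 M14 M23 u₁ u₂ u₃ u₄ : R) :
    Prop :=
  u₁ * u₂ = u₃ * u₄ ∧ u₁ + u₃ = M13 ∧ u₂ + u₄ = M24 ∧ u₁ + u₄ = M14 ∧ u₂ + u₃ = M23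

section Field

variable {K : Type*} [Field K] {M13 M24 M14 M23 M : K}

theorem isDetailedBalanceEquilibrium_div (hM : M13 + M24 = M) (hM' : M14 + M23 = M)
    (hM0 : M ≠ 0) :
    IsDetailedBalanceEquilibrium M13 M24 M14 M23
      (M13 * M14 / M) (M23 * M24 / M) (M13 * M23 / M) (M14 * M24 / M) := by
  refine ⟨by ring, ?_, ?_, ?_, ?_⟩ <;> field_simp
  · linear_combination M13 * hM'
  · linear_combination M24 * hM'
  · linear_combination M14 * hM
  · linear_combination M23 * hM

theorem IsDetailedBalanceEquilibrium.eq_div {u₁ u₂ u₃ u₄ : K}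
    (h : IsDetailedBalanceEquilibrium M13 M24 M14 M23 u₁ u₂ u₃ u₄)
    (hM : M13 + M24 = M) (hM0 : M ≠ 0) :
    u₁ = M13 * M14 / M ∧ u₂ = M23 * M24 / M ∧ u₃ = M13 * M23 / M ∧ u₄ = M14 * M24 / M := by
  obtain ⟨hq, e13, e24, e14, e23⟩ := h
  subst e13 e24 e14 e23 hM
  simp only [eq_div_iff hM0]
  exact ⟨by linear_combination hq, by linear_combination hq, by linear_combination -hq,
    by linear_combination -hq⟩

end Field

theorem stmt12 (M13 M24 M14 M23 M : ℝ)
    (h13 : 0 < M13) (h24 : 0 < M24) (h14 : 0 < M14) (h23 : 0 < M23)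
    (hM : M13 + M24 = M) (hM' : M14 + M23 = M) :
    (0 < M13 * M14 / M ∧ 0 < M23 * M24 / M ∧ 0 < M13 * M23 / M ∧ 0 < M14 * M24 / M ∧
      (M13 * M14 / M) * (M23 * M24 / M) = (M13 * M23 / M) * (M14 * M24 / M) ∧
      M13 * M14 / M + M13 * M23 / M = M13 ∧
      M23 * M24 / M + M14 * M24 / M = M24 ∧
      M13 * M14 / M + M14 * M24 / M = M14 ∧
      M23 * M24 / M + M13 * M23 / M = M23) ∧
    (∀ u₁ u₂ u₃ u₄ : ℝ, 0 < u₁ → 0 < u₂ → 0 < u₃ → 0 < u₄ →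
      u₁ * u₂ = u₃ * u₄ → u₁ + u₃ = M13 → u₂ + u₄ = M24 → u₁ + u₄ = M14 → u₂ + u₃ = M23 →
      u₁ = M13 * M14 / M ∧ u₂ = M23 * M24 / M ∧ u₃ = M13 * M23 / M ∧ u₄ = M14 * M24 / M) := by
  have hMpos : 0 < M := by linarith
  obtain ⟨hq, e13, e24, e14, e23⟩ := isDetailedBalanceEquilibrium_div hM hM' hMpos.ne'
  refine ⟨⟨by positivity, by positivity, by positivity, by positivity, hq, e13, e24, e14, e23⟩, ?_⟩
  intro u₁ u₂ u₃ u₄ _ _ _ _ hq e13 e24 e14 e23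
  exact IsDetailedBalanceEquilibrium.eq_div ⟨hq, e13, e24, e14, e23⟩ hM hMpos.ne'
end
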